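/- arXiv:2103.16631 — 5 statements merged into one kernel-verified Lean document; each statement's English description precedes it below -/
import Mathlib

section
/- Let ≤ be a partial order on Fin 3 and let f : (Fin n → Fin 3) → Fin 3 be non-monotone, i.e. there exist α, β with α i ≤ β i for all i but ¬(f α ≤ f β). Then there exist a point γ : Fin n → Fin 3, a coordinate i, and a ≤ b in Fin 3 such that ¬( f (Function.update γ i a) ≤ f (Function.update γ i b) ). That is, a non-monotone unary function can be obtained from f by substituting constants. -/
open Function

theorem rel_apply_of_rel_apply_update {ι α β : Type*} [Fintype ι] [DecidableEq ι]
    (r : α → α → Prop) (s : β → β → Prop) [Std.Refl s] [IsTrans β s] (f : (ι → α) → β)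
    (hf : ∀ γ i a b, r a b → s (f (update γ i a)) (f (update γ i b)))
    {x y : ι → α} (hxy : ∀ i, r (x i) (y i)) : s (f x) (f y) := by
  suffices h : ∀ t : Finset ι, s (f x) (f (t.piecewise y x)) by
    simpa using h Finset.univ
  intro t
  induction t using Finset.induction_on with
  | empty => simpa using Std.Refl.refl (f x)
  | insert j t hj ih =>
    have hxj : t.piecewise y x j = x j := Finset.piecewise_eq_of_notMem t y x hj
    have hstep := hf (t.piecewise y x) j (x j) (y j) (hxy j)
    rw [← hxj, update_eq_self] at hstep
    rw [Finset.piecewise_insert]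
    exact _root_.trans ih hstep

/-- From a function non-monotone w.r.t. a partial order on `Fin 3`, substituting
constants in all but one variable yields a non-monotone unary function. -/
theorem stmt_6 {n : ℕ} (le : Fin 3 → Fin 3 → Prop) [IsPartialOrder (Fin 3) le]
    (f : (Fin n → Fin 3) → Fin 3)
    (α β : Fin n → Fin 3) (hab : ∀ i, le (α i) (β i)) (hf : ¬ le (f α) (f β)) :
    ∃ (γ : Fin n → Fin 3) (i : Fin n) (a b : Fin 3), le a b ∧
      ¬ le (f (Function.update γ i a)) (f (Function.update γ i b)) := by
  by_contra! hmono
  exact hf (rel_apply_of_rel_apply_update le le f hmono hab)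
end

section
/- Let f : (Fin n → Fin 3) → Fin 3 be a function that does not preserve the partition {0,1}{2}, i.e. there exist tuples α, β with (α i = 2 ↔ β i = 2) and (α i ∈ {0,1} ↔ β i ∈ {0,1}) for all i, such that exactly one of f α, f β equals 2. Then there exists an assignment c : Fin n → Option (Fin 3) with all constants c i ∈ {some 0, some 2, none}, where 'none' means the single free variable x, such that the unary function g(x) = f (fun i => (c i).getD x) does not preserve the partition {0,1}{2}, that is, there exist a, b ∈ Fin 3 with (a = 2 ↔ b = 2) and exactly one of g a, g b equal to 2. -/
/-- From a function not preserving the partition {0,1}{2}, using only the constants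
0 and 2 and one free variable, one obtains a unary function not preserving the
partition. -/
theorem stmt_7 {n : ℕ} (f : (Fin n → Fin 3) → Fin 3)
    (α β : Fin n → Fin 3) (hev : ∀ i, (α i = 2 ↔ β i = 2))
    (hf : ¬ (f α = 2 ↔ f β = 2)) :
    ∃ c : Fin n → Option (Fin 3),
      (∀ i, c i = some 0 ∨ c i = some 2 ∨ c i = none) ∧
      ∃ a b : Fin 3, (a = 2 ↔ b = 2) ∧
        ¬ ((f fun i => (c i).getD a) = 2 ↔ (f fun i => (c i).getD b) = 2) := by
  classical
  set c₁ : Fin n → Option (Fin 3) :=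
    fun i => if α i = 2 then some 2 else if α i = 1 then none else some 0 with hc₁
  set c₂ : Fin n → Option (Fin 3) :=
    fun i => if β i = 2 then some 2 else if β i = 1 then none else some 0 with hc₂
  have htri : ∀ x : Fin 3, x = 0 ∨ x = 1 ∨ x = 2 := by decide
  have h1 : (fun i => (c₁ i).getD 1) = α := by
    funext i
    rcases htri (α i) with h | h | h <;> simp [hc₁, h]
  have h2 : (fun i => (c₂ i).getD 1) = β := by
    funext i
    rcases htri (β i) with h | h | h <;> simp [hc₂, h]
  have h0 : (fun i => (c₁ i).getD 0) = (fun i => (c₂ i).getD 0) := by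
    funext i
    by_cases h : α i = 2
    · have h' := (hev i).mp h
      simp [hc₁, hc₂, h, h']
    · have h' : β i ≠ 2 := fun hb => h ((hev i).mpr hb)
      by_cases ha : α i = 1 <;> by_cases hb : β i = 1 <;> simp [hc₁, hc₂, h, h', ha, hb]
  set α₀ := fun i => (c₁ i).getD 0 with hα₀
  by_cases hmid : (f α₀ = 2 ↔ f α = 2)
  · -- then f α₀ and f β differ
    refine ⟨c₂, ?_, 0, 1, by decide, ?_⟩
    · intro i
      rcases htri (β i) with h | h | h <;> simp [hc₂, h]
    · rw [h2, ← h0]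
      tauto
  · refine ⟨c₁, ?_, 0, 1, by decide, ?_⟩
    · intro i
      rcases htri (α i) with h | h | h <;> simp [hc₁, h]
    · rw [h1, ← hα₀]
      exact hmid
end

section
/- Define W₁ ⊆ (Fin 3 → Fin 3) to be the set of unary functions preserving both the partition {0,1}{2} and the partition {1,2}{0} of E₃. If g, h ∈ W₁ with g 0 = h 0 and g 2 = h 2, then g 1 = h 1. Equivalently, no two distinct unary functions of W₁ differ only at the point 1. -/
/-- Unary functions preserving both the partition {0,1}{2} and the partition {1,2}{0}. -/
def W1 : Set (Fin 3 → Fin 3) :=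
  {g | (∀ a b : Fin 3, (a = 2 ↔ b = 2) → (g a = 2 ↔ g b = 2)) ∧
       (∀ a b : Fin 3, (a = 0 ↔ b = 0) → (g a = 0 ↔ g b = 0))}

/-- No two unary functions of `W₁` differ only at the point 1. -/
theorem stmt_11 (g h : Fin 3 → Fin 3) (hg : g ∈ W1) (hh : h ∈ W1)
    (h0 : g 0 = h 0) (h2 : g 2 = h 2) : g 1 = h 1 := by
  obtain ⟨hg2, hg0⟩ := hg
  obtain ⟨hh2, hh0⟩ := hh
  have a1 := hg2 1 0 (by decide)
  have a2 := hg0 1 2 (by decide)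
  have b1 := hh2 1 0 (by decide)
  have b2 := hh0 1 2 (by decide)
  have e2 : g 1 = 2 ↔ h 1 = 2 := by rw [a1, b1, h0]
  have e0 : g 1 = 0 ↔ h 1 = 0 := by rw [a2, b2, h2]
  have tri : ∀ x : Fin 3, x = 0 ∨ x = 1 ∨ x = 2 := by decide
  rcases tri (g 1) with hx | hx | hx <;> rcases tri (h 1) with hy | hy | hy <;> simp_all
end

section
/- Let s : Fin 3 → Fin 3 be the cyclic shift s x = x + α (mod 3) with α ∈ {1, 2}, and let f : Fin 3 → Fin 3 be a unary function whose range has exactly two elements (f omits exactly one value). Then every unary function g : Fin 3 → Fin 3 that is not surjective (omits at least one value) belongs to the subsemigroup of (Fin 3 → Fin 3) under composition generated by {f, s}. -/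
/-!
Every non-surjective map of a three-element set is constant off one point, so it has the form
`update (const u) z v`. Since `s` generates all translations of `Fin 3`, the semigroup is closed
under `h ↦ (· + c) ∘ h ∘ (· + d)`, which moves `z` and `u` freely but keeps the difference
`v - u`. The map `f = update (const u) z v` itself supplies the difference `v - u`; the products
`f ∘ (· + d) ∘ f` supply the differences `u - v` and `0`, and these three exhaust `Fin 3`.
-/

open Function

section Update

variable {α β : Type*} [DecidableEq α]

theorem Function.exists_eq_update_const_of_not_injective [Fintype α]
    (hα : Fintype.card α = 3) {g : α → β} (hg : ¬ Injective g) :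
    ∃ z u v, g = update (const α u) z v := by
  obtain ⟨a, b, hab, hne⟩ : ∃ a b, g a = g b ∧ a ≠ b := by simpa [Injective] using hg
  obtain ⟨z, hz⟩ : ∃ z, ({a, b}ᶜ : Finset α) = {z} :=
    Finset.card_eq_one.1 (by rw [Finset.card_compl, Finset.card_pair hne, hα])
  refine ⟨z, g a, g z, funext fun x => ?_⟩
  by_cases hx : x = z
  · subst hx; simp
  · have hxab : x ∈ ({a, b} : Finset α) := by
      by_contra h
      exact hx (Finset.mem_singleton.1 (hz ▸ Finset.mem_compl.2 h))
    rcases Finset.mem_insert.1 hxab with rfl | hxb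
    · simp [hx]
    · obtain rfl := Finset.mem_singleton.1 hxb; simp [hx, hab]

theorem Function.exists_eq_update_const_of_ncard_range_eq_two [Fintype α]
    (hα : Fintype.card α = 3) {f : α → β} (hf : (Set.range f).ncard = 2) :
    ∃ z u v, u ≠ v ∧ f = update (const α u) z v := by
  have hinj : ¬ Injective f := fun hinj => by
    rw [Set.ncard_range_of_injective hinj, Nat.card_eq_fintype_card, hα] at hf
    exact absurd hf (by norm_num)
  obtain ⟨z, u, v, rfl⟩ := exists_eq_update_const_of_not_injective hα hinj
  refine ⟨z, u, v, fun huv => ?_, rfl⟩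
  subst huv
  have : Nonempty α := ⟨z⟩
  have hrange : Set.range (const α u) = {u} := Set.range_const
  rw [show update (const α u) z u = const α u from update_eq_self z _, hrange,
    Set.ncard_singleton] at hf
  exact absurd hf (by norm_num)

theorem Function.update_const_comp_comp_update_const_of_apply_eq {u v : β} {a : α}
    {t : β → α} (hu : t u = a) (hv : t v ≠ a) :
    update (const α u) a v ∘ t ∘ update (const α u) a v = update (const α v) a u := by
  funext x
  by_cases hx : x = a <;> simp [hx, hu, hv]

theorem Function.update_const_comp_comp_update_const_of_apply_ne {u v : β} {a : α}
    {t : β → α} (hu : t u ≠ a) (hv : t v ≠ a) :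
    update (const α u) a v ∘ t ∘ update (const α u) a v = const α u := by
  funext x
  by_cases hx : x = a <;> simp [hx, hu, hv]

end Update

section Translation

variable {G : Type*}

theorem add_right_nsmul_mem_of_add_right_mem [AddMonoid G] {S : Subsemigroup (Function.End G)}
    {α : G} (hα : (· + α) ∈ S) (n : ℕ) : (· + (n + 1) • α) ∈ S := by
  induction n with
  | zero => simpa using hα
  | succ n ih =>
    have hcomp : (· + α) ∘ (· + (n + 1) • α) = (· + (n + 1 + 1) • α) := by
      funext x; simp [succ_nsmul, add_assoc]
    exact hcomp ▸ S.mul_mem hα ih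

variable [AddCommGroup G]

theorem add_sub_ne_of_ne {a c : G} (h : a ≠ c) (b : G) : a + (b - c) ≠ b := by
  simpa [add_sub_left_comm, sub_eq_zero] using h

variable [DecidableEq G]

theorem update_const_mem_of_sub_eq {S : Subsemigroup (Function.End G)}
    (hS : ∀ c, (· + c) ∈ S) {u v z : G} (h : update (const G u) z v ∈ S) {u' v' z' : G}
    (hd : v' - u' = v - u) : update (const G u') z' v' ∈ S := by
  have hconj : (· + (u' - u)) ∘ update (const G u) z v ∘ (· + (z - z')) =
      update (const G u') z' v' := by
    have hv : v + (u' - u) = v' := by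
      calc v + (u' - u) = v - u + u' := by abel
        _ = v' := by rw [← hd, sub_add_cancel]
    funext x
    by_cases hx : x + (z - z') = z
    · obtain rfl : x = z' := by rw [← add_sub_cancel_right x (z - z'), hx, sub_sub_cancel]
      simp [hv]
    · have hx' : x ≠ z' := by rintro rfl; exact hx (add_sub_cancel x z)
      simp [hx, hx']
  exact hconj ▸ S.mul_mem (hS _) (S.mul_mem h (hS _))

end Translation

/-- A unary function taking exactly two values, together with a nontrivial cyclic
shift, generates (under composition) all non-surjective unary functions on `E₃`. -/
theorem stmt_13 (α : Fin 3) (hα : α = 1 ∨ α = 2)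
    (f : Function.End (Fin 3)) (hf : (Set.range f).ncard = 2)
    (s : Function.End (Fin 3)) (hs : ∀ x, s x = x + α)
    (g : Function.End (Fin 3)) (hg : ¬ Function.Surjective g) :
    g ∈ Subsemigroup.closure {f, s} := by
  set S := Subsemigroup.closure {f, s}
  have hsS : (· + α) ∈ S := funext hs ▸ Subsemigroup.subset_closure (by simp)
  have hS : ∀ c, (· + c) ∈ S := fun c => by
    obtain ⟨n, rfl⟩ : ∃ n : Fin 3, c = (n.val + 1) • α := by
      revert c; rcases hα with rfl | rfl <;> decide
    exact add_right_nsmul_mem_of_add_right_mem hsS n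
  obtain ⟨z, u, v, huv, hfuv⟩ :=
    exists_eq_update_const_of_ncard_range_eq_two (Fintype.card_fin 3) hf
  have hfS : update (const _ u) z v ∈ S := hfuv ▸ Subsemigroup.subset_closure (by simp)
  have hff : ∀ d, update (const _ u) z v ∘ (· + d) ∘ update (const _ u) z v ∈ S :=
    fun d => S.mul_mem hfS (S.mul_mem (hS d) hfS)
  have hswap : update (const _ v) z u ∈ S := by
    rw [← update_const_comp_comp_update_const_of_apply_eq (t := (· + (z - u)))
      (add_sub_cancel u z) (add_sub_ne_of_ne huv.symm z)]
    exact hff _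
  have hconst : update (const _ u) z u ∈ S := by
    obtain ⟨w, hwu, hwv⟩ := (by decide : ∀ a b : Fin 3, ∃ w, w ≠ a ∧ w ≠ b) u v
    rw [show update (const _ u) z u = const _ u from update_eq_self z _,
      ← update_const_comp_comp_update_const_of_apply_ne (t := (· + (z - w)))
        (add_sub_ne_of_ne hwu.symm z)
        (add_sub_ne_of_ne hwv.symm z)]
    exact hff _
  obtain ⟨z', u', v', rfl⟩ := exists_eq_update_const_of_not_injective (Fintype.card_fin 3)
    (fun hinj => hg (Finite.injective_iff_surjective.1 hinj))
  obtain hd | hd | hd := (by decide : ∀ a b c d : Fin 3, a ≠ b →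
    d - c = b - a ∨ d - c = a - b ∨ d - c = a - a) u v u' v' huv
  · exact update_const_mem_of_sub_eq hS hfS hd
  · exact update_const_mem_of_sub_eq hS hswap hd
  · exact update_const_mem_of_sub_eq hS hconst hd
end

section
/- Let P = { h : Fin 3 → Fin 3 | Function.Bijective h } be the set of all six permutations of E₃, viewed as columns of a 3-row matrix. Suppose f : (Fin n → Fin 3) → Fin 3 preserves P, i.e. whenever c : Fin n → (Fin 3 → Fin 3) has all c j bijective, the map fun i => f (fun j => c j i) is bijective. Then f does not single out a vertex of any square: there are no four points α₁, α₂, α₃, α₄ : Fin n → Fin 3 forming a square (all coordinates but two are equal across the four points, and on each of those two coordinates exactly two values occur, each on exactly two of the points, giving the four combinations) such that f α₁ differs from each of f α₂, f α₃, f α₄. -/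
private lemma fin3_third_ne : ∀ a b : Fin 3, a ≠ b → -(a + b) ≠ a ∧ -(a + b) ≠ b := by decide

private lemma fin3_bij : ∀ a b : Fin 3, a ≠ b → Function.Bijective ![a, b, -(a + b)] := by
  decide

private lemma fin3_pig1 : ∀ A B C D : Fin 3, A ≠ B → A ≠ C → D ≠ A → D ≠ B → D ≠ C → B = C := by
  decide

private lemma fin3_pig2 : ∀ A B P Q : Fin 3, A ≠ B → P ≠ A → P ≠ B → Q ≠ A → Q ≠ B →
    P = Q := by decide

private lemma fin3_add1 : ∀ a : Fin 3, a + 1 ≠ a ∧ a + 2 ≠ a ∧ a + 1 ≠ a + 2 := by decide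

private lemma key {n : ℕ} (f : (Fin n → Fin 3) → Fin 3)
    (hf : ∀ c : Fin n → (Fin 3 → Fin 3), (∀ j, Function.Bijective (c j)) →
        Function.Bijective (fun i => f (fun j => c j i)))
    (x y : Fin n → Fin 3) (hxy : ∀ k, x k ≠ y k) : f x ≠ f y := by
  set c : Fin n → (Fin 3 → Fin 3) := fun k => ![x k, y k, -(x k + y k)] with hc
  have hbij : ∀ k, Function.Bijective (c k) := fun k => fin3_bij _ _ (hxy k)
  have h := (hf c hbij).injective
  intro hfe
  have h0 : (fun j => c j 0) = x := by funext k; simp [hc]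
  have h1 : (fun j => c j 1) = y := by funext k; simp [hc]
  have : (0 : Fin 3) = 1 := h (show f (fun j => c j 0) = f (fun j => c j 1) by
    rw [h0, h1]; exact hfe)
  exact absurd this (by decide)

/-- A function preserving the matrix of all permutations of `E₃` singles out
no vertex of any square, i.e. is quasilinear. -/
theorem stmt_15 {n : ℕ} (f : (Fin n → Fin 3) → Fin 3)
    (hf : ∀ c : Fin n → (Fin 3 → Fin 3), (∀ j, Function.Bijective (c j)) →
        Function.Bijective (fun i => f (fun j => c j i))) :
    ¬ ∃ (i j : Fin n) (γ : Fin n → Fin 3) (a₁ a₂ b₁ b₂ : Fin 3),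
      i ≠ j ∧ a₁ ≠ a₂ ∧ b₁ ≠ b₂ ∧
      (f (Function.update (Function.update γ i a₁) j b₁) ≠
         f (Function.update (Function.update γ i a₁) j b₂) ∧
       f (Function.update (Function.update γ i a₁) j b₁) ≠
         f (Function.update (Function.update γ i a₂) j b₁) ∧
       f (Function.update (Function.update γ i a₁) j b₁) ≠
         f (Function.update (Function.update γ i a₂) j b₂)) := by
  rintro ⟨i, j, γ, a₁, a₂, b₁, b₂, hij, ha, hb, h1, h2, -⟩
  set x : Fin n → Fin 3 := Function.update (Function.update γ i a₁) j b₁ with hxdef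
  set y : Fin n → Fin 3 := Function.update (Function.update γ i a₁) j b₂ with hydef
  set z : Fin n → Fin 3 := Function.update (Function.update γ i a₂) j b₁ with hzdef
  obtain ⟨ha3₁, ha3₂⟩ := fin3_third_ne a₁ a₂ ha
  obtain ⟨hb3₁, hb3₂⟩ := fin3_third_ne b₁ b₂ hb
  set a₃ : Fin 3 := -(a₁ + a₂) with ha3
  set b₃ : Fin 3 := -(b₁ + b₂) with hb3
  -- coordinate evaluations
  have hx : ∀ m, x m = if m = j then b₁ else if m = i then a₁ else γ m := by
    intro m; simp [hxdef, Function.update_apply]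
  have hy : ∀ m, y m = if m = j then b₂ else if m = i then a₁ else γ m := by
    intro m; simp [hydef, Function.update_apply]
  have hz : ∀ m, z m = if m = j then b₁ else if m = i then a₂ else γ m := by
    intro m; simp [hzdef, Function.update_apply]
  set p : Fin n → Fin 3 := fun m => if m = j then b₃ else if m = i then a₃ else γ m + 1
    with hp
  set zs : Fin n → Fin 3 := fun m => if m = j then b₃ else if m = i then a₂ else γ m + 1
    with hzs
  set us : Fin n → Fin 3 := fun m => if m = j then b₂ else if m = i then a₃ else γ m + 2
    with hus
  have hji : ¬ (i = j) := hij
  -- p is fully distinct from x, y, z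
  have hpx : ∀ m, p m ≠ x m := by
    intro m
    rw [hp, hx m]
    by_cases hmj : m = j
    · simp [hmj, hb3₁]
    · by_cases hmi : m = i
      · simp [hmj, hmi, hji, ha3₁]
      · simp [hmj, hmi, (fin3_add1 (γ m)).1]
  have hpy : ∀ m, p m ≠ y m := by
    intro m
    rw [hp, hy m]
    by_cases hmj : m = j
    · simp [hmj, hb3₂]
    · by_cases hmi : m = i
      · simp [hmj, hmi, hji, ha3₁]
      · simp [hmj, hmi, (fin3_add1 (γ m)).1]
  have hpz : ∀ m, p m ≠ z m := by
    intro m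
    rw [hp, hz m]
    by_cases hmj : m = j
    · simp [hmj, hb3₁]
    · by_cases hmi : m = i
      · simp [hmj, hmi, hji, ha3₂]
      · simp [hmj, hmi, (fin3_add1 (γ m)).1]
  have hfyz : f y = f z :=
    fin3_pig1 (f x) (f y) (f z) (f p) h1 h2 (key f hf p x hpx) (key f hf p y hpy)
      (key f hf p z hpz)
  -- zs fully distinct from x and y; us fully distinct from x and z; zs from us
  have hzsx : ∀ m, zs m ≠ x m := by
    intro m
    rw [hzs, hx m]
    by_cases hmj : m = j
    · simp [hmj, hb3₁]
    · by_cases hmi : m = i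
      · simp [hmj, hmi, hji]; exact fun h => ha h.symm
      · simp [hmj, hmi, (fin3_add1 (γ m)).1]
  have hzsy : ∀ m, zs m ≠ y m := by
    intro m
    rw [hzs, hy m]
    by_cases hmj : m = j
    · simp [hmj, hb3₂]
    · by_cases hmi : m = i
      · simp [hmj, hmi, hji]; exact fun h => ha h.symm
      · simp [hmj, hmi, (fin3_add1 (γ m)).1]
  have husx : ∀ m, us m ≠ x m := by
    intro m
    rw [hus, hx m]
    by_cases hmj : m = j
    · simp [hmj]; exact fun h => hb h.symm
    · by_cases hmi : m = i
      · simp [hmj, hmi, hji, ha3₁]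
      · simp [hmj, hmi, (fin3_add1 (γ m)).2.1]
  have husz : ∀ m, us m ≠ z m := by
    intro m
    rw [hus, hz m]
    by_cases hmj : m = j
    · simp [hmj]; exact fun h => hb h.symm
    · by_cases hmi : m = i
      · simp [hmj, hmi, hji, ha3₂]
      · simp [hmj, hmi, (fin3_add1 (γ m)).2.1]
  have hzsus : ∀ m, zs m ≠ us m := by
    intro m
    rw [hzs, hus]
    by_cases hmj : m = j
    · simp [hmj, hb3₂]
    · by_cases hmi : m = i
      · simp [hmj, hmi, hji]; exact fun h => ha3₂ h.symm
      · simp [hmj, hmi, (fin3_add1 (γ m)).2.2]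
  exact key f hf zs us hzsus
    (fin3_pig2 (f x) (f y) (f zs) (f us) h1 (key f hf zs x hzsx) (key f hf zs y hzsy)
      (key f hf us x husx) (hfyz ▸ key f hf us z husz))
end
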